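/- arXiv:2509.14102 — 4 statements merged into one kernel-verified Lean document; each statement's English description precedes it below -/
import Mathlib

section
/- Monotone comparative statics: let two parameter vectors (m₁,H₁,B₁,α₁) and (m₂,H₂,B₂,α₂) with mᵢ ≥ 0, Hᵢ ≥ 0, Bᵢ ≥ 0, αᵢ ∈ (0,1] satisfy m₁ ≤ m₂, H₁ ≤ H₂, B₁ ≤ B₂, α₁ ≤ α₂. For i = 1,2 let Πᵢ(μ) = αᵢ·μ·(mᵢ + Hᵢ·P(μ)) + Bᵢ·P(μ) − c(μ) and assume the corresponding gap function Δᵢ(μ) = c'(μ) − (αᵢ·(mᵢ + Hᵢ·P(μ)) + αᵢ·μ·Hᵢ·P'(μ) + Bᵢ·P'(μ)) is strictly increasing on [a,b], and let μ*ᵢ be the unique maximizer of Πᵢ on [a,b]. Then μ*₁ ≤ μ*₂. -/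
open Finset

/-- The binomial-tail (pass-probability) function:
`P(μ) = ∑_{k=s}^{q} (q choose k) · μ^k · (1−μ)^{q−k}`. -/
noncomputable def binTail (q s : ℕ) (μ : ℝ) : ℝ :=
  ∑ k ∈ Finset.Icc s q, (q.choose k : ℝ) * μ ^ k * (1 - μ) ^ (q - k)

/-- The creator's objective `Π(μ) = α·μ·(m + H·P(μ)) + B·P(μ) − c(μ)`. -/
noncomputable def creatorObj (q s : ℕ) (α m H B : ℝ) (c : ℝ → ℝ) (μ : ℝ) : ℝ :=
  α * μ * (m + H * binTail q s μ) + B * binTail q s μ - c μ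

/-- The gap function `Δ(μ) = c'(μ) − (α·(m + H·P(μ)) + α·μ·H·P'(μ) + B·P'(μ))`. -/
noncomputable def gapFun (q s : ℕ) (α m H B : ℝ) (c : ℝ → ℝ) (μ : ℝ) : ℝ :=
  deriv c μ -
    (α * (m + H * binTail q s μ) + α * μ * H * deriv (binTail q s) μ
      + B * deriv (binTail q s) μ)

lemma coeff1 (Q K : ℕ) : ((K:ℝ)+1) * ((Q+1).choose (K+1)) = ((Q:ℝ)+1) * (Q.choose K) := by
  have h := Nat.add_one_mul_choose_eq Q K
  have h' : ((Q.succ * Q.choose K : ℕ) : ℝ) = ((Q.succ.choose K.succ * K.succ : ℕ) : ℝ) := by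
    exact_mod_cast congrArg (Nat.cast : ℕ → ℝ) h
  push_cast at h'
  linarith

lemma coeff2 (Q K : ℕ) :
    ((Q:ℝ) - K) * ((Q+1).choose (K+1)) = ((Q:ℝ)+1) * (Q.choose (K+1)) := by
  have h1 := coeff1 Q K
  have h2 : (((Q+1).choose (K+1) : ℕ) : ℝ) = ((Q.choose K + Q.choose (K+1) : ℕ) : ℝ) := by
    exact_mod_cast congrArg (Nat.cast : ℕ → ℝ) (Nat.choose_succ_succ Q K)
  push_cast at h2
  nlinarith [h1, h2]

lemma binTail_hasDerivAt (q s : ℕ) (hs : 1 ≤ s) (hsq : s ≤ q) (μ : ℝ) :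
    HasDerivAt (binTail q s)
      ((q:ℝ) * ((q-1).choose (s-1) : ℕ) * μ ^ (s-1) * (1-μ) ^ (q-s)) μ := by
  set A : ℕ → ℝ := fun k => (q:ℝ) * ((q-1).choose (k-1) : ℕ) * μ ^ (k-1) * (1-μ) ^ (q-k)
    with hA
  have hsum : HasDerivAt (binTail q s) (∑ k ∈ Finset.Icc s q, (A k - A (k+1))) μ := by
    have : binTail q s = fun x => ∑ k ∈ Finset.Icc s q,
        (q.choose k : ℝ) * x ^ k * (1 - x) ^ (q - k) := rfl
    rw [this]
    apply HasDerivAt.fun_sum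
    intro k hk
    simp only [Finset.mem_Icc] at hk
    obtain ⟨K, rfl⟩ : ∃ K, k = K + 1 := ⟨k - 1, by omega⟩
    obtain ⟨Q, rfl⟩ : ∃ Q, q = Q + 1 := ⟨q - 1, by omega⟩
    have hKQ : K ≤ Q := by omega
    have h1 : HasDerivAt (fun x : ℝ => x ^ (K+1)) (((K:ℝ)+1) * μ ^ K) μ := by
      simpa using hasDerivAt_pow (K+1) μ
    have hsub : HasDerivAt (fun x : ℝ => 1 - x) (-1) μ := by
      simpa using (hasDerivAt_const μ (1:ℝ)).fun_sub (hasDerivAt_id μ)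
    have h2 : HasDerivAt (fun x : ℝ => (1 - x) ^ (Q - K))
        ((((Q - K : ℕ)):ℝ) * (1-μ) ^ (Q - K - 1) * (-1)) μ := by
      exact (hasDerivAt_pow (Q - K) (1 - μ)).comp μ hsub
    have hterm := (h1.const_mul (((Q+1).choose (K+1) : ℕ) : ℝ)).fun_mul h2
    have hexp1 : (Q + 1) - (K + 1) = Q - K := by omega
    have hexp2 : (Q + 1) - (K + 1 + 1) = Q - K - 1 := by omega
    have hcast : (((Q - K : ℕ)):ℝ) = (Q:ℝ) - K := Nat.cast_sub hKQ
    have hval : (((Q+1).choose (K+1) : ℕ) : ℝ) * (((K:ℝ)+1) * μ ^ K) * (1-μ) ^ (Q - K)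
        + (((Q+1).choose (K+1) : ℕ) : ℝ) * μ ^ (K+1)
          * ((((Q - K : ℕ)):ℝ) * (1-μ) ^ (Q - K - 1) * (-1))
        = A (K+1) - A (K+1+1) := by
      simp only [hA, Nat.add_sub_cancel, hexp1, hexp2, hcast]
      have e1 := coeff1 Q K
      have e2 := coeff2 Q K
      push_cast
      linear_combination (μ^K*(1-μ)^(Q-K)) * e1 - (μ^(K+1)*(1-μ)^(Q-K-1)) * e2
    rw [hexp1] at *
    exact hterm.congr_deriv (by linarith [hval])
  have htel : (∑ k ∈ Finset.Icc s q, (A k - A (k+1))) = A s := by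
    rw [← Finset.Ico_add_one_right_eq_Icc, Finset.sum_Ico_eq_sum_range]
    have h0 : ∀ i, A (s + i) - A (s + i + 1) = (fun j => A (s + j)) i - (fun j => A (s + j)) (i+1) := by
      intro i; simp [Nat.add_assoc]
    simp only [h0]
    rw [Finset.sum_range_sub' (fun j => A (s + j))]
    have : s + (q + 1 - s) = q + 1 := by omega
    rw [this]
    have hs0 : A (s + 0) = A s := by norm_num
    rw [hs0]
    have hz : A (q + 1) = 0 := by
      simp only [hA, Nat.add_sub_cancel]
      have : (q-1).choose q = 0 := Nat.choose_eq_zero_of_lt (by omega)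
      simp [this]
    rw [hz, sub_zero]
  rw [htel] at hsum
  exact hsum

lemma binTail_nonneg (q s : ℕ) {μ : ℝ} (h0 : 0 ≤ μ) (h1 : μ ≤ 1) :
    0 ≤ binTail q s μ := by
  apply Finset.sum_nonneg
  intro k _
  have : (0:ℝ) ≤ 1 - μ := by linarith
  positivity

lemma binTail_deriv_nonneg (q s : ℕ) (hs : 1 ≤ s) (hsq : s ≤ q) {μ : ℝ}
    (h0 : 0 ≤ μ) (h1 : μ ≤ 1) : 0 ≤ deriv (binTail q s) μ := by
  rw [(binTail_hasDerivAt q s hs hsq μ).deriv]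
  have : (0:ℝ) ≤ 1 - μ := by linarith
  positivity

lemma obj_hasDerivAt (q s : ℕ) (hs : 1 ≤ s) (hsq : s ≤ q) (α m H B : ℝ) (c : ℝ → ℝ)
    (μ : ℝ) (hc : HasDerivAt c (deriv c μ) μ) :
    HasDerivAt (creatorObj q s α m H B c) (-(gapFun q s α m H B c μ)) μ := by
  have hP := binTail_hasDerivAt q s hs hsq μ
  have hPd : HasDerivAt (binTail q s) (deriv (binTail q s) μ) μ := by
    rw [hP.deriv]; exact hP
  have h := ((((hasDerivAt_id' (x := μ)).const_mul α).mul
      ((hPd.const_mul H).const_add m)).add (hPd.const_mul B)).sub hc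
  have hfun : creatorObj q s α m H B c =
      fun x => α * x * (m + H * binTail q s x) + B * binTail q s x - c x := rfl
  rw [hfun]
  refine h.congr_deriv ?_
  unfold gapFun
  ring

/-- Monotone comparative statics: if the parameter vectors satisfy
`m₁ ≤ m₂`, `H₁ ≤ H₂`, `B₁ ≤ B₂`, `α₁ ≤ α₂` (with `mᵢ, Hᵢ, Bᵢ ≥ 0`, `αᵢ ∈ (0,1]`), each gap
function `Δᵢ` is strictly increasing on `[a,b]`, and `μ*ᵢ` is the unique maximizer of `Πᵢ`
on `[a,b]`, then `μ*₁ ≤ μ*₂`. -/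
theorem monotone_comparative_statics (q s : ℕ) (hq : 1 ≤ q) (hs : 1 ≤ s) (hsq : s ≤ q)
    (a b : ℝ) (ha : 0 < a) (hab : a < b) (hb : b < 1)
    (c : ℝ → ℝ) (U : Set ℝ) (hU : IsOpen U) (hsub : Set.Icc a b ⊆ U)
    (hc : ContDiffOn ℝ 2 c U)
    (m₁ H₁ B₁ α₁ m₂ H₂ B₂ α₂ : ℝ)
    (hm₁ : 0 ≤ m₁) (hH₁ : 0 ≤ H₁) (hB₁ : 0 ≤ B₁) (hα₁0 : 0 < α₁) (hα₁1 : α₁ ≤ 1)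
    (hm₂ : 0 ≤ m₂) (hH₂ : 0 ≤ H₂) (hB₂ : 0 ≤ B₂) (hα₂0 : 0 < α₂) (hα₂1 : α₂ ≤ 1)
    (hm : m₁ ≤ m₂) (hH : H₁ ≤ H₂) (hB : B₁ ≤ B₂) (hα : α₁ ≤ α₂)
    (hΔ₁ : StrictMonoOn (gapFun q s α₁ m₁ H₁ B₁ c) (Set.Icc a b))
    (hΔ₂ : StrictMonoOn (gapFun q s α₂ m₂ H₂ B₂ c) (Set.Icc a b))
    (μstar₁ μstar₂ : ℝ) (hmem₁ : μstar₁ ∈ Set.Icc a b) (hmem₂ : μstar₂ ∈ Set.Icc a b)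
    (hmax₁ : ∀ μ ∈ Set.Icc a b,
      creatorObj q s α₁ m₁ H₁ B₁ c μ ≤ creatorObj q s α₁ m₁ H₁ B₁ c μstar₁)
    (hmax₂ : ∀ μ ∈ Set.Icc a b,
      creatorObj q s α₂ m₂ H₂ B₂ c μ ≤ creatorObj q s α₂ m₂ H₂ B₂ c μstar₂) :
    μstar₁ ≤ μstar₂ := by
  by_contra hcon
  push_neg at hcon
  obtain ⟨ha₁, hb₁⟩ := hmem₁
  obtain ⟨ha₂, hb₂⟩ := hmem₂
  -- derivative of c on [a,b]
  have hcd : ∀ μ ∈ Set.Icc a b, HasDerivAt c (deriv c μ) μ := by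
    intro μ hμ
    exact ((hc.contDiffAt (hU.mem_nhds (hsub hμ))).differentiableAt (by norm_num)).hasDerivAt
  have hd₁ : ∀ μ ∈ Set.Icc a b, HasDerivAt (creatorObj q s α₁ m₁ H₁ B₁ c)
      (-(gapFun q s α₁ m₁ H₁ B₁ c μ)) μ :=
    fun μ hμ => obj_hasDerivAt q s hs hsq α₁ m₁ H₁ B₁ c μ (hcd μ hμ)
  have hd₂ : ∀ μ ∈ Set.Icc a b, HasDerivAt (creatorObj q s α₂ m₂ H₂ B₂ c)
      (-(gapFun q s α₂ m₂ H₂ B₂ c μ)) μ :=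
    fun μ hμ => obj_hasDerivAt q s hs hsq α₂ m₂ H₂ B₂ c μ (hcd μ hμ)
  set t := (μstar₂ + μstar₁) / 2 with htdef
  have ht2 : μstar₂ < t := by simp only [htdef]; linarith
  have ht1 : t < μstar₁ := by simp only [htdef]; linarith
  have htmem : t ∈ Set.Icc a b := ⟨by linarith, by linarith⟩
  -- MVT on [μstar₂, t] for Π₂
  have hsubI₂ : Set.Icc μstar₂ t ⊆ Set.Icc a b :=
    Set.Icc_subset_Icc (by linarith) (by linarith)
  obtain ⟨η, hη, hηeq⟩ := exists_hasDerivAt_eq_slope (creatorObj q s α₂ m₂ H₂ B₂ c)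
    (fun x => -(gapFun q s α₂ m₂ H₂ B₂ c x)) ht2
    (fun x hx => ((hd₂ x (hsubI₂ hx)).differentiableAt.continuousAt).continuousWithinAt)
    (fun x hx => hd₂ x (hsubI₂ (Set.mem_Icc_of_Ioo hx)))
  have hηmem : η ∈ Set.Icc a b := hsubI₂ (Set.mem_Icc_of_Ioo hη)
  have hslope₂ : creatorObj q s α₂ m₂ H₂ B₂ c t ≤ creatorObj q s α₂ m₂ H₂ B₂ c μstar₂ :=
    hmax₂ t htmem
  have hgη : 0 ≤ gapFun q s α₂ m₂ H₂ B₂ c η := by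
    have : -(gapFun q s α₂ m₂ H₂ B₂ c η) ≤ 0 := by
      rw [hηeq]
      apply div_nonpos_of_nonpos_of_nonneg <;> linarith
    linarith
  have hgt₂ : 0 < gapFun q s α₂ m₂ H₂ B₂ c t :=
    lt_of_le_of_lt hgη (hΔ₂ hηmem htmem hη.2)
  -- MVT on [t, μstar₁] for Π₁
  have hsubI₁ : Set.Icc t μstar₁ ⊆ Set.Icc a b :=
    Set.Icc_subset_Icc (by linarith) (by linarith)
  obtain ⟨ξ, hξ, hξeq⟩ := exists_hasDerivAt_eq_slope (creatorObj q s α₁ m₁ H₁ B₁ c)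
    (fun x => -(gapFun q s α₁ m₁ H₁ B₁ c x)) ht1
    (fun x hx => ((hd₁ x (hsubI₁ hx)).differentiableAt.continuousAt).continuousWithinAt)
    (fun x hx => hd₁ x (hsubI₁ (Set.mem_Icc_of_Ioo hx)))
  have hξmem : ξ ∈ Set.Icc a b := hsubI₁ (Set.mem_Icc_of_Ioo hξ)
  have hslope₁ : creatorObj q s α₁ m₁ H₁ B₁ c t ≤ creatorObj q s α₁ m₁ H₁ B₁ c μstar₁ :=
    hmax₁ t htmem
  have hgξ : gapFun q s α₁ m₁ H₁ B₁ c ξ ≤ 0 := by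
    have : 0 ≤ -(gapFun q s α₁ m₁ H₁ B₁ c ξ) := by
      rw [hξeq]
      apply div_nonneg <;> linarith
    linarith
  have hgt₁ : gapFun q s α₁ m₁ H₁ B₁ c t < 0 :=
    lt_of_lt_of_le (hΔ₁ htmem hξmem hξ.1) hgξ
  -- pointwise comparison at t
  have hP0 : 0 ≤ binTail q s t := binTail_nonneg q s (by linarith [htmem.1]) (by linarith [htmem.2])
  have hP'0 : 0 ≤ deriv (binTail q s) t :=
    binTail_deriv_nonneg q s hs hsq (by linarith [htmem.1]) (by linarith [htmem.2])
  have ht0 : 0 < t := by linarith [htmem.1]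
  have hcomp : gapFun q s α₂ m₂ H₂ B₂ c t ≤ gapFun q s α₁ m₁ H₁ B₁ c t := by
    unfold gapFun
    have h1 : α₁ * m₁ ≤ α₂ * m₂ := mul_le_mul hα hm hm₁ (le_of_lt hα₂0)
    have h2 : α₁ * H₁ ≤ α₂ * H₂ := mul_le_mul hα hH hH₁ (le_of_lt hα₂0)
    nlinarith [mul_le_mul_of_nonneg_right h2 hP0,
      mul_le_mul_of_nonneg_right h2 (mul_nonneg (le_of_lt ht0) hP'0),
      mul_le_mul_of_nonneg_right hB hP'0]
  linarith
end

section
/- First-best implementability: suppose μFB ∈ [a,b] satisfies the planner first-order condition m + H·P(μFB) + μFB·H·P'(μFB) = c'(μFB). Define the discovery bounty B* = (m + H·P(μFB) + μFB·H·P'(μFB)) · (1−α) / P'(μFB) (note P'(μFB) > 0 since μFB ∈ (0,1)). Then B* ≥ 0 and μFB satisfies the private first-order condition α·(m + H·P(μFB)) + α·μFB·H·P'(μFB) + B*·P'(μFB) = c'(μFB). If in addition the gap function formed with bounty B*, namely ΔB*(μ) = c'(μ) − (α·(m + H·P(μ)) + α·μ·H·P'(μ) + B*·P'(μ)), is strictly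 increasing on [a,b], then μFB is the unique maximizer on [a,b] of the creator's objective α·μ·(m + H·P(μ)) + B*·P(μ) − c(μ). -/
lemma natid1 (q k : ℕ) (hq : 1 ≤ q) (hk : 1 ≤ k) :
    q.choose k * k = q * (q-1).choose (k-1) := by
  have h := Nat.add_one_mul_choose_eq (q-1) (k-1)
  have h1 : q - 1 + 1 = q := by omega
  have h2 : k - 1 + 1 = k := by omega
  simp only [Nat.succ_eq_add_one, h1, h2] at h
  omega

lemma natid2 (q k : ℕ) (hq : 1 ≤ q) (hkq : k ≤ q) :
    q.choose k * (q - k) = q * (q-1).choose k := by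
  by_cases hk : k = q
  · subst hk
    simp [Nat.choose_eq_zero_of_lt (show k - 1 < k by omega)]
  · have h1 := Nat.choose_succ_right_eq q k
    have h2 := Nat.add_one_mul_choose_eq (q-1) k
    have h3 : q - 1 + 1 = q := by omega
    simp only [Nat.succ_eq_add_one, h3] at h2
    omega

lemma hasDerivAt_binTail (q s : ℕ) (hq : 1 ≤ q) (hs : 1 ≤ s) (hsq : s ≤ q) (μ : ℝ) :
    HasDerivAt (binTail q s)
      ((q : ℝ) * ((q-1).choose (s-1) : ℝ) * μ ^ (s-1) * (1-μ) ^ (q-s)) μ := by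
  set g : ℕ → ℝ := fun j => (((q-1).choose j : ℕ) : ℝ) * μ ^ j * (1-μ) ^ (q-1-j) with hg
  have key : ∀ k ∈ Finset.Icc s q,
      HasDerivAt (fun x : ℝ => (q.choose k : ℝ) * x ^ k * (1 - x) ^ (q - k))
        ((q : ℝ) * (g (k-1) - g k)) μ := by
    intro k hk
    simp only [Finset.mem_Icc] at hk
    have hk1 : 1 ≤ k := le_trans hs hk.1
    have h1 : HasDerivAt (fun x : ℝ => (q.choose k : ℝ) * x ^ k)
        ((q.choose k : ℝ) * ((k : ℝ) * μ ^ (k-1))) μ := (hasDerivAt_pow k μ).const_mul _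
    have h2 : HasDerivAt (fun x : ℝ => (1 - x) ^ (q - k))
        (((q - k : ℕ) : ℝ) * (1 - μ) ^ (q - k - 1) * (0 - 1)) μ := by
      exact (hasDerivAt_pow (q - k) (1 - μ)).comp μ ((hasDerivAt_const μ 1).sub (hasDerivAt_id μ))
    have h := h1.mul h2
    refine h.congr_deriv ?_
    have e1 : (q.choose k : ℝ) * (k : ℝ) = (q : ℝ) * (((q-1).choose (k-1) : ℕ) : ℝ) := by
      exact_mod_cast congrArg (Nat.cast (R := ℝ)) (natid1 q k hq hk1)
    have e2 : (q.choose k : ℝ) * ((q - k : ℕ) : ℝ) = (q : ℝ) * (((q-1).choose k : ℕ) : ℝ) := by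
      exact_mod_cast congrArg (Nat.cast (R := ℝ)) (natid2 q k hq hk.2)
    have ee1 : q - 1 - (k - 1) = q - k := by omega
    have ee2 : q - k - 1 = q - 1 - k := by omega
    simp only [hg, ee1, ee2]
    linear_combination (μ ^ (k-1) * (1-μ) ^ (q-k)) * e1 - (μ ^ k * (1-μ) ^ (q-1-k)) * e2
  have hsum := HasDerivAt.fun_sum key
  have heq : ∑ k ∈ Finset.Icc s q, (q : ℝ) * (g (k-1) - g k)
      = (q : ℝ) * ((q-1).choose (s-1) : ℝ) * μ ^ (s-1) * (1-μ) ^ (q-s) := by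
    rw [← Finset.mul_sum]
    have hIcc : Finset.Icc s q = Finset.Ico s (q+1) := by
      rw [Finset.Ico_add_one_right_eq_Icc]
    have step : ∑ k ∈ Finset.Icc s q, (g (k-1) - g k)
        = ∑ i ∈ Finset.range (q + 1 - s), ((fun i => g (s - 1 + i)) i - (fun i => g (s - 1 + i)) (i+1)) := by
      rw [hIcc, Finset.sum_Ico_eq_sum_range]
      apply Finset.sum_congr rfl
      intro i _
      have e1 : s + i - 1 = s - 1 + i := by omega
      have e2 : s + i = s - 1 + (i + 1) := by omega
      simp only
      rw [e1, e2]
    rw [step, Finset.sum_range_sub']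
    have e3 : s - 1 + 0 = s - 1 := by omega
    have e4 : s - 1 + (q + 1 - s) = q := by omega
    have e5 : q - 1 - (s - 1) = q - s := by omega
    have hgq : g q = 0 := by
      simp [hg, Nat.choose_eq_zero_of_lt (show q - 1 < q by omega)]
    simp only [e3, e4, hgq, sub_zero, hg, e5]
    simp [Nat.choose_eq_zero_of_lt (show q - 1 < q by omega), mul_assoc]
  rw [heq] at hsum
  exact hsum

/-- First-best implementability: if `μFB ∈ [a,b]` satisfies the planner
first-order condition `m + H·P(μFB) + μFB·H·P'(μFB) = c'(μFB)` and the discovery bounty is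
`B* = (m + H·P(μFB) + μFB·H·P'(μFB))·(1−α)/P'(μFB)`, then `B* ≥ 0`, `μFB` satisfies the
private first-order condition, and if the gap function formed with bounty `B*` is strictly
increasing on `[a,b]`, then `μFB` is the unique maximizer on `[a,b]` of the creator's
objective `α·μ·(m + H·P(μ)) + B*·P(μ) − c(μ)`. -/
theorem first_best_implementability (q s : ℕ) (hq : 1 ≤ q) (hs : 1 ≤ s) (hsq : s ≤ q)
    (α m H a b : ℝ) (hα0 : 0 < α) (hα1 : α ≤ 1) (hm : 0 ≤ m) (hH : 0 ≤ H)
    (ha : 0 < a) (hab : a < b) (hb : b < 1)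
    (c : ℝ → ℝ) (U : Set ℝ) (hU : IsOpen U) (hsub : Set.Icc a b ⊆ U)
    (hc : ContDiffOn ℝ 2 c U)
    (μFB : ℝ) (hmem : μFB ∈ Set.Icc a b)
    (hFOC : m + H * binTail q s μFB + μFB * H * deriv (binTail q s) μFB = deriv c μFB)
    (Bstar : ℝ)
    (hBstar : Bstar = (m + H * binTail q s μFB + μFB * H * deriv (binTail q s) μFB)
        * (1 - α) / deriv (binTail q s) μFB) :
    0 ≤ Bstar ∧
    (α * (m + H * binTail q s μFB) + α * μFB * H * deriv (binTail q s) μFB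
        + Bstar * deriv (binTail q s) μFB = deriv c μFB) ∧
    (StrictMonoOn
        (fun μ => deriv c μ -
          (α * (m + H * binTail q s μ) + α * μ * H * deriv (binTail q s) μ
            + Bstar * deriv (binTail q s) μ)) (Set.Icc a b) →
      ∀ μ ∈ Set.Icc a b, μ ≠ μFB →
        α * μ * (m + H * binTail q s μ) + Bstar * binTail q s μ - c μ <
          α * μFB * (m + H * binTail q s μFB) + Bstar * binTail q s μFB - c μFB) := by

  -- the derivative is positive on (0,1)
  have hD : ∀ x : ℝ, deriv (binTail q s) x
      = (q : ℝ) * ((q-1).choose (s-1) : ℝ) * x ^ (s-1) * (1-x) ^ (q-s) := fun x =>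
    (hasDerivAt_binTail q s hq hs hsq x).deriv
  have hDpos : ∀ x : ℝ, 0 < x → x < 1 → 0 < deriv (binTail q s) x := by
    intro x h0 h1
    rw [hD]
    have hch : 0 < ((q-1).choose (s-1) : ℝ) := by
      exact_mod_cast Nat.choose_pos (by omega : s - 1 ≤ q - 1)
    have hq' : (0:ℝ) < q := by exact_mod_cast hq
    have h1' : (0:ℝ) < 1 - x := by linarith
    positivity
  have hin : ∀ x ∈ Set.Icc a b, 0 < x ∧ x < 1 := by
    intro x hx
    exact ⟨lt_of_lt_of_le ha hx.1, lt_of_le_of_lt hx.2 hb⟩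
  obtain ⟨hFB0, hFB1⟩ := hin μFB hmem
  have hPd : 0 < deriv (binTail q s) μFB := hDpos μFB hFB0 hFB1
  have hPne : deriv (binTail q s) μFB ≠ 0 := ne_of_gt hPd
  -- nonnegativity of P on [0,1]
  have hPnn : ∀ x : ℝ, 0 < x → x < 1 → 0 ≤ binTail q s x := by
    intro x h0 h1
    apply Finset.sum_nonneg
    intro k _
    have h1' : (0:ℝ) ≤ 1 - x := by linarith
    positivity
  have hXnn : 0 ≤ m + H * binTail q s μFB + μFB * H * deriv (binTail q s) μFB := by
    have := hPnn μFB hFB0 hFB1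
    have h2 : 0 ≤ H * binTail q s μFB := mul_nonneg hH this
    have h3 : 0 ≤ μFB * H * deriv (binTail q s) μFB :=
      mul_nonneg (mul_nonneg hFB0.le hH) hPd.le
    linarith
  have hB0 : 0 ≤ Bstar := by
    rw [hBstar]
    exact div_nonneg (mul_nonneg hXnn (by linarith)) hPd.le
  -- private FOC
  have hPFOC : α * (m + H * binTail q s μFB) + α * μFB * H * deriv (binTail q s) μFB
      + Bstar * deriv (binTail q s) μFB = deriv c μFB := by
    rw [hBstar, div_mul_cancel₀ _ hPne]
    linear_combination hFOC
  refine ⟨hB0, hPFOC, ?_⟩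
  intro hmono μ hμ hne
  set F : ℝ → ℝ := fun x => α * x * (m + H * binTail q s x) + Bstar * binTail q s x - c x
    with hF
  set Δ : ℝ → ℝ := fun x => deriv c x -
      (α * (m + H * binTail q s x) + α * x * H * deriv (binTail q s) x
        + Bstar * deriv (binTail q s) x) with hΔ
  have hΔFB : Δ μFB = 0 := by simp only [hΔ]; linarith [hPFOC]
  -- derivative of F
  have hF' : ∀ x ∈ Set.Icc a b, HasDerivAt F (-(Δ x)) x := by
    intro x hx
    have hcx : DifferentiableAt ℝ c x :=
      (hc.differentiableOn (by norm_num)).differentiableAt (hU.mem_nhds (hsub hx))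
    have hP := hasDerivAt_binTail q s hq hs hsq x
    have hPdx : deriv (binTail q s) x
        = (q : ℝ) * ((q-1).choose (s-1) : ℝ) * x ^ (s-1) * (1-x) ^ (q-s) := hD x
    have h1 : HasDerivAt (fun y : ℝ => α * y * (m + H * binTail q s y))
        (α * 1 * (m + H * binTail q s x)
          + α * x * (H * ((q : ℝ) * ((q-1).choose (s-1) : ℝ) * x ^ (s-1) * (1-x) ^ (q-s)))) x :=
      ((hasDerivAt_id x).const_mul α).mul ((hP.const_mul H).const_add m)
    have h2 : HasDerivAt (fun y : ℝ => Bstar * binTail q s y)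
        (Bstar * ((q : ℝ) * ((q-1).choose (s-1) : ℝ) * x ^ (s-1) * (1-x) ^ (q-s))) x :=
      hP.const_mul Bstar
    have h3 := (h1.add h2).sub hcx.hasDerivAt
    refine h3.congr_deriv ?_
    simp only [hΔ, hPdx]
    ring
  have hcont : ContinuousOn F (Set.Icc a b) := fun x hx =>
    ((hF' x hx).differentiableAt).continuousAt.continuousWithinAt
  rcases lt_or_gt_of_ne hne with hlt | hgt
  · -- μ < μFB : F strictly increasing on [μ, μFB]
    have hsubI : Set.Icc μ μFB ⊆ Set.Icc a b := Set.Icc_subset_Icc hμ.1 hmem.2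
    have := strictMonoOn_of_deriv_pos (convex_Icc μ μFB) (hcont.mono hsubI) ?_
    · exact this (Set.left_mem_Icc.2 hlt.le) (Set.right_mem_Icc.2 hlt.le) hlt
    · intro x hx
      rw [interior_Icc] at hx
      have hxab : x ∈ Set.Icc a b := ⟨le_trans hμ.1 hx.1.le, le_trans hx.2.le hmem.2⟩
      rw [(hF' x hxab).deriv]
      have : Δ x < Δ μFB := hmono hxab hmem hx.2
      rw [hΔFB] at this
      linarith
  · -- μFB < μ : F strictly decreasing on [μFB, μ]
    have hsubI : Set.Icc μFB μ ⊆ Set.Icc a b := Set.Icc_subset_Icc hmem.1 hμ.2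
    have := strictAntiOn_of_deriv_neg (convex_Icc μFB μ) (hcont.mono hsubI) ?_
    · exact this (Set.left_mem_Icc.2 hgt.le) (Set.right_mem_Icc.2 hgt.le) hgt
    · intro x hx
      rw [interior_Icc] at hx
      have hxab : x ∈ Set.Icc a b := ⟨le_trans hmem.1 hx.1.le, le_trans hx.2.le hμ.2⟩
      rw [(hF' x hxab).deriv]
      have : Δ μFB < Δ x := hmono hmem hxab hx.1
      rw [hΔFB] at this
      linarith
end

section
/- Front-loading is weakly optimal: let 0 ≤ m₁ ≤ m₂ be two discounted testing masses, and for i = 1,2 let Πᵢ(μ) = α·μ·(mᵢ + H·P(μ)) + B·P(μ) − c(μ). Assume the gap function Δᵢ(μ) = c'(μ) − (α·(mᵢ + H·P(μ)) + α·μ·H·P'(μ) + B·P'(μ)) is strictly increasing on [a,b] for i = 1,2, and let μ*ᵢ be the unique maximizer of Πᵢ on [a,b]. Then μ*₁ ≤ μ*₂. If in addition B·P'(μ) ≤ m₁ + H·P(μ) + μ·H·P'(μ) for all μ ∈ [a,b], then the platform objective W(μ; m) = μ·(m + H·P(μ)) − B·P(μ) satisfies W(μ*₁; m₁) ≤ W(μ*₂;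 m₂). -/
/-- The platform objective `W(μ; m) = μ·(m + H·P(μ)) − B·P(μ)`. -/
noncomputable def platformObj (q s : ℕ) (H B m : ℝ) (μ : ℝ) : ℝ :=
  μ * (m + H * binTail q s μ) - B * binTail q s μ

lemma binTail_differentiable (q s : ℕ) : Differentiable ℝ (binTail q s) := by
  unfold binTail
  apply Differentiable.fun_sum
  intro k _
  apply Differentiable.mul
  · exact (differentiable_const _).mul (differentiable_pow k)
  · exact ((differentiable_const (1:ℝ)).sub differentiable_id).pow _

lemma hasDerivAt_creatorObj (q s : ℕ) (α m H B : ℝ) (c : ℝ → ℝ) (x : ℝ)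
    (hc : DifferentiableAt ℝ c x) :
    HasDerivAt (creatorObj q s α m H B c) (-(gapFun q s α m H B c x)) x := by
  have hP := ((binTail_differentiable q s) x).hasDerivAt
  have hcx := hc.hasDerivAt
  have hA : HasDerivAt (fun μ : ℝ => α * μ) α x := by
    simpa using (hasDerivAt_id x).const_mul α
  have hBt : HasDerivAt (fun μ => m + H * binTail q s μ) (H * deriv (binTail q s) x) x :=
    (hP.const_mul H).const_add m
  have h := ((hA.mul hBt).add (hP.const_mul B)).sub hcx
  have heq : creatorObj q s α m H B c =
      fun μ => α * μ * (m + H * binTail q s μ) + B * binTail q s μ - c μ := rfl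
  rw [heq]
  refine h.congr_deriv ?_
  unfold gapFun
  ring

lemma hasDerivAt_platformObj (q s : ℕ) (H B m : ℝ) (x : ℝ) :
    HasDerivAt (platformObj q s H B m)
      (m + H * binTail q s x + x * H * deriv (binTail q s) x
        - B * deriv (binTail q s) x) x := by
  have hP := ((binTail_differentiable q s) x).hasDerivAt
  have hBt : HasDerivAt (fun μ => m + H * binTail q s μ) (H * deriv (binTail q s) x) x :=
    (hP.const_mul H).const_add m
  have h := ((hasDerivAt_id x).mul hBt).sub (hP.const_mul B)
  have heq : platformObj q s H B m =
      fun μ => μ * (m + H * binTail q s μ) - B * binTail q s μ := rfl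
  rw [heq]
  refine h.congr_deriv ?_
  simp only [id_eq]
  ring

/-- Front-loading is weakly optimal: for discounted testing masses
`0 ≤ m₁ ≤ m₂`, with each gap function strictly increasing on `[a,b]` and `μ*ᵢ` the unique
maximizer of `Πᵢ` on `[a,b]`, we have `μ*₁ ≤ μ*₂`; and if in addition
`B·P'(μ) ≤ m₁ + H·P(μ) + μ·H·P'(μ)` on `[a,b]`, then the platform objective satisfies
`W(μ*₁; m₁) ≤ W(μ*₂; m₂)`. -/
theorem frontloading_weakly_optimal (q s : ℕ) (hq : 1 ≤ q) (hs : 1 ≤ s) (hsq : s ≤ q)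
    (α H B a b : ℝ) (hα0 : 0 < α) (hα1 : α ≤ 1) (hH : 0 ≤ H) (hB : 0 ≤ B)
    (ha : 0 < a) (hab : a < b) (hb : b < 1)
    (c : ℝ → ℝ) (U : Set ℝ) (hU : IsOpen U) (hsub : Set.Icc a b ⊆ U)
    (hc : ContDiffOn ℝ 2 c U)
    (m₁ m₂ : ℝ) (hm₁ : 0 ≤ m₁) (hm : m₁ ≤ m₂)
    (hΔ₁ : StrictMonoOn (gapFun q s α m₁ H B c) (Set.Icc a b))
    (hΔ₂ : StrictMonoOn (gapFun q s α m₂ H B c) (Set.Icc a b))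
    (μstar₁ μstar₂ : ℝ) (hmem₁ : μstar₁ ∈ Set.Icc a b) (hmem₂ : μstar₂ ∈ Set.Icc a b)
    (hmax₁ : ∀ μ ∈ Set.Icc a b,
      creatorObj q s α m₁ H B c μ ≤ creatorObj q s α m₁ H B c μstar₁)
    (hmax₂ : ∀ μ ∈ Set.Icc a b,
      creatorObj q s α m₂ H B c μ ≤ creatorObj q s α m₂ H B c μstar₂) :
    μstar₁ ≤ μstar₂ ∧
    ((∀ μ ∈ Set.Icc a b,
        B * deriv (binTail q s) μ ≤
          m₁ + H * binTail q s μ + μ * H * deriv (binTail q s) μ) →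
      platformObj q s H B m₁ μstar₁ ≤ platformObj q s H B m₂ μstar₂) := by
  have hcdiff : ∀ x ∈ Set.Icc a b, DifferentiableAt ℝ c x := fun x hx =>
    ((hc.differentiableOn (by norm_num)).differentiableAt (hU.mem_nhds (hsub hx)))
  -- decomposition: Π₂ = Π₁ + α μ (m₂ - m₁)
  have hdec : ∀ μ : ℝ, creatorObj q s α m₂ H B c μ
      = creatorObj q s α m₁ H B c μ + α * μ * (m₂ - m₁) := by
    intro μ; unfold creatorObj; ring
  have hle : μstar₁ ≤ μstar₂ := by
    by_contra hcon
    push_neg at hcon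
    have e1 := hmax₁ μstar₂ hmem₂
    have e2 := hmax₂ μstar₁ hmem₁
    rw [hdec μstar₁, hdec μstar₂] at e2
    have key : α * μstar₁ * (m₂ - m₁) ≤ α * μstar₂ * (m₂ - m₁) := by linarith
    have hmm : m₂ = m₁ := by
      by_contra hne
      have hlt : m₁ < m₂ := lt_of_le_of_ne hm (fun h => hne h.symm)
      nlinarith [mul_pos (mul_pos hα0 (sub_pos.mpr hcon)) (sub_pos.mpr hlt)]
    -- now μstar₂ is also a maximizer of Π₁, and Π₁ is strictly concave
    have heq : creatorObj q s α m₁ H B c μstar₂ = creatorObj q s α m₁ H B c μstar₁ := by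
      subst hmm
      exact le_antisymm e1 (by linarith)
    have hconc : StrictConcaveOn ℝ (Set.Icc a b) (creatorObj q s α m₁ H B c) := by
      apply StrictAntiOn.strictConcaveOn_of_deriv (convex_Icc a b)
      · intro x hx
        exact ((hasDerivAt_creatorObj q s α m₁ H B c x (hcdiff x hx)).continuousAt).continuousWithinAt
      · intro x hx y hy hxy
        rw [interior_Icc] at hx hy
        have dx := (hasDerivAt_creatorObj q s α m₁ H B c x (hcdiff x (Set.Ioo_subset_Icc_self hx))).deriv
        have dy := (hasDerivAt_creatorObj q s α m₁ H B c y (hcdiff y (Set.Ioo_subset_Icc_self hy))).deriv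
        rw [dx, dy, neg_lt_neg_iff]
        exact hΔ₁ (Set.Ioo_subset_Icc_self hx) (Set.Ioo_subset_Icc_self hy) hxy
    have hne : μstar₂ ≠ μstar₁ := ne_of_lt hcon
    have hmid := hconc.2 hmem₂ hmem₁ hne (by norm_num : (0:ℝ) < 1/2)
      (by norm_num : (0:ℝ) < 1/2) (by norm_num)
    have hmem : (1/2 : ℝ) • μstar₂ + (1/2 : ℝ) • μstar₁ ∈ Set.Icc a b :=
      (convex_Icc a b) hmem₂ hmem₁ (by norm_num) (by norm_num) (by norm_num)
    have hzm := hmax₁ _ hmem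
    rw [heq] at hmid
    simp only [smul_eq_mul] at hmid hzm
    linarith
  refine ⟨hle, fun hBP => ?_⟩
  -- W(·; m₁) is monotone on [a,b]
  have hmono : MonotoneOn (platformObj q s H B m₁) (Set.Icc a b) := by
    apply monotoneOn_of_deriv_nonneg (convex_Icc a b)
    · intro x _
      exact (hasDerivAt_platformObj q s H B m₁ x).continuousAt.continuousWithinAt
    · intro x _
      exact (hasDerivAt_platformObj q s H B m₁ x).differentiableAt.differentiableWithinAt
    · intro x hx
      rw [interior_Icc] at hx
      rw [(hasDerivAt_platformObj q s H B m₁ x).deriv]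
      have := hBP x (Set.Ioo_subset_Icc_self hx)
      linarith
  have h1 : platformObj q s H B m₁ μstar₁ ≤ platformObj q s H B m₁ μstar₂ :=
    hmono hmem₁ hmem₂ hle
  have h2 : platformObj q s H B m₁ μstar₂ ≤ platformObj q s H B m₂ μstar₂ := by
    unfold platformObj
    have h0 : 0 < μstar₂ := lt_of_lt_of_le ha hmem₂.1
    nlinarith
  linarith
end

section
/- Derivative of a Poisson-Binomial tail: if each p_t is differentiable at x₀, then the Poisson-Binomial tail P is differentiable at x₀ with P'(x₀) = ∑_{t ∈ T} p_t'(x₀) · R_t(x₀), where R_t is the leave-one-out weight. -/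
open Finset in
/-- Combinatorial identity behind the derivative of a Poisson-Binomial tail. -/
lemma poissonBinomial_comb_key {ι : Type*} [DecidableEq ι] (s : ℕ) (hs : 1 ≤ s) (T : Finset ι)
    (a d : ι → ℝ) :
    ∑ A ∈ T.powerset.filter (fun A => s ≤ A.card),
      ((∑ t ∈ A, (∏ u ∈ A.erase t, a u) * d t) * ∏ t ∈ T \ A, (1 - a t)
       + (∏ t ∈ A, a t) * ∑ t ∈ T \ A, (∏ u ∈ (T \ A).erase t, (1 - a u)) * (-d t))
    = ∑ t ∈ T, d t *
        ∑ B ∈ (T.erase t).powerset.filter (fun B => B.card = s - 1),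
          (∏ u ∈ B, a u) * ∏ u ∈ (T.erase t) \ B, (1 - a u) := by
  set F := T.powerset.filter (fun A => s ≤ A.card) with hF
  set c : ι → Finset ι → ℝ := fun t A =>
    if t ∈ A then ((∏ u ∈ A.erase t, a u) * ∏ u ∈ T \ A, (1 - a u)) * d t
    else -(((∏ u ∈ A, a u) * ∏ u ∈ (T \ A).erase t, (1 - a u)) * d t) with hc
  have step1 : ∀ A ∈ F,
      (∑ t ∈ A, (∏ u ∈ A.erase t, a u) * d t) * ∏ t ∈ T \ A, (1 - a t)
       + (∏ t ∈ A, a t) * ∑ t ∈ T \ A, (∏ u ∈ (T \ A).erase t, (1 - a u)) * (-d t)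
      = ∑ t ∈ T, c t A := by
    intro A hA
    simp only [hF, mem_filter, mem_powerset] at hA
    rw [← Finset.sum_sdiff hA.1]
    have e1 : ∑ t ∈ T \ A, c t A
        = -((∏ u ∈ A, a u) * ∑ t ∈ T \ A, (∏ u ∈ (T \ A).erase t, (1 - a u)) * d t) := by
      rw [Finset.mul_sum, ← Finset.sum_neg_distrib]
      apply Finset.sum_congr rfl
      intro t ht
      have : t ∉ A := (Finset.mem_sdiff.mp ht).2
      simp [hc, this]; ring
    have e2 : ∑ t ∈ A, c t A
        = (∑ t ∈ A, (∏ u ∈ A.erase t, a u) * d t) * ∏ t ∈ T \ A, (1 - a t) := by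
      rw [Finset.sum_mul]
      apply Finset.sum_congr rfl
      intro t ht
      simp [hc, ht]; ring
    rw [e1, e2]
    simp [Finset.mul_sum, Finset.sum_neg_distrib]
    ring_nf
  rw [Finset.sum_congr rfl step1, Finset.sum_comm]
  apply Finset.sum_congr rfl
  intro t ht
  rw [← Finset.sum_filter_add_sum_filter_not F (fun A => t ∈ A)]
  have hS1 : ∑ A ∈ F.filter (fun A => t ∈ A), c t A
      = ∑ B ∈ (T.erase t).powerset.filter (fun B => s - 1 ≤ B.card),
          ((∏ u ∈ B, a u) * ∏ u ∈ (T.erase t) \ B, (1 - a u)) * d t := by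
    apply Finset.sum_nbij' (fun A => A.erase t) (fun B => insert t B)
    · intro A hA
      simp only [hF, mem_filter, mem_powerset] at hA ⊢
      obtain ⟨⟨hAT, hcard⟩, htA⟩ := hA
      refine ⟨Finset.erase_subset_erase t hAT, ?_⟩
      rw [Finset.card_erase_of_mem htA]; omega
    · intro B hB
      simp only [mem_filter, mem_powerset, hF] at hB ⊢
      obtain ⟨hBT, hcard⟩ := hB
      have htB : t ∉ B := fun h => (Finset.mem_erase.mp (hBT h)).1 rfl
      refine ⟨⟨?_, ?_⟩, Finset.mem_insert_self t B⟩
      · exact Finset.insert_subset ht (hBT.trans (Finset.erase_subset t T))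
      · rw [Finset.card_insert_of_notMem htB]; omega
    · intro A hA
      simp only [hF, mem_filter, mem_powerset] at hA
      exact Finset.insert_erase hA.2
    · intro B hB
      simp only [mem_filter, mem_powerset] at hB
      have htB : t ∉ B := fun h => (Finset.mem_erase.mp (hB.1 h)).1 rfl
      exact Finset.erase_insert htB
    · intro A hA
      simp only [hF, mem_filter, mem_powerset] at hA
      obtain ⟨⟨hAT, hcard⟩, htA⟩ := hA
      have : T \ A = (T.erase t) \ (A.erase t) := by
        ext x
        simp only [Finset.mem_sdiff, Finset.mem_erase]
        constructor
        · rintro ⟨hxT, hxA⟩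
          exact ⟨⟨fun h => hxA (h ▸ htA), hxT⟩, fun h => hxA h.2⟩
        · rintro ⟨⟨hxt, hxT⟩, hxA⟩
          exact ⟨hxT, fun h => hxA ⟨hxt, h⟩⟩
      simp [hc, htA, this]
  have hS2 : ∑ A ∈ F.filter (fun A => ¬ t ∈ A), c t A
      = -∑ B ∈ (T.erase t).powerset.filter (fun B => s ≤ B.card),
          ((∏ u ∈ B, a u) * ∏ u ∈ (T.erase t) \ B, (1 - a u)) * d t := by
    rw [← Finset.sum_neg_distrib]
    apply Finset.sum_congr
    · ext A
      simp only [hF, mem_filter, mem_powerset, Finset.subset_erase]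
      tauto
    · intro A hA
      simp only [mem_filter, mem_powerset, Finset.subset_erase] at hA
      obtain ⟨⟨hAT, htA⟩, hcard⟩ := hA
      have : (T \ A).erase t = (T.erase t) \ A := by
        ext x
        simp only [Finset.mem_sdiff, Finset.mem_erase]
        tauto
      simp [hc, htA, this]
  rw [hS1, hS2]
  have hsplit : (T.erase t).powerset.filter (fun B => s - 1 ≤ B.card)
      = (T.erase t).powerset.filter (fun B => B.card = s - 1)
        ∪ (T.erase t).powerset.filter (fun B => s ≤ B.card) := by
    ext B
    simp only [Finset.mem_union, mem_filter, mem_powerset, ← and_or_left]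
    exact and_congr_right fun _ => by omega
  have hdisj : Disjoint ((T.erase t).powerset.filter (fun B => B.card = s - 1))
      ((T.erase t).powerset.filter (fun B => s ≤ B.card)) := by
    rw [Finset.disjoint_left]
    intro B h1 h2
    simp only [mem_filter] at h1 h2
    omega
  rw [hsplit, Finset.sum_union hdisj, Finset.mul_sum]
  ring_nf
  congr 1
  funext B
  ring

/-- Derivative of a Poisson-Binomial tail: with
`P(x) = ∑_{A ⊆ T, |A| ≥ s} ∏_{t∈A} p_t(x) · ∏_{t∈T∖A} (1 − p_t(x))` and leave-one-out
weights `R_t(x) = ∑_{A ⊆ T∖{t}, |A| = s−1} ∏_{u∈A} p_u(x) · ∏_{u∈(T∖{t})∖A} (1 − p_u(x))`,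
if each `p_t` is differentiable at `x₀` then `P` is differentiable at `x₀` with
`P'(x₀) = ∑_{t∈T} p_t'(x₀) · R_t(x₀)`. -/
theorem poissonBinomial_tail_hasDerivAt {ι : Type*} [DecidableEq ι]
    (q s : ℕ) (hq : 1 ≤ q) (hs : 1 ≤ s) (hsq : s ≤ q)
    (T : Finset ι) (hT : T.card = q)
    (p : ι → ℝ → ℝ) (p' : ι → ℝ) (x₀ : ℝ)
    (hp : ∀ t ∈ T, HasDerivAt (p t) (p' t) x₀) :
    HasDerivAt
      (fun x => ∑ A ∈ T.powerset.filter (fun A => s ≤ A.card),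
        (∏ t ∈ A, p t x) * ∏ t ∈ T \ A, (1 - p t x))
      (∑ t ∈ T, p' t *
        ∑ A ∈ (T.erase t).powerset.filter (fun A => A.card = s - 1),
          (∏ u ∈ A, p u x₀) * ∏ u ∈ (T.erase t) \ A, (1 - p u x₀)) x₀ := by
  have main : HasDerivAt
      (fun x => ∑ A ∈ T.powerset.filter (fun A => s ≤ A.card),
        (∏ t ∈ A, p t x) * ∏ t ∈ T \ A, (1 - p t x))
      (∑ A ∈ T.powerset.filter (fun A => s ≤ A.card),
        ((∑ t ∈ A, (∏ u ∈ A.erase t, p u x₀) * p' t) * ∏ t ∈ T \ A, (1 - p t x₀)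
         + (∏ t ∈ A, p t x₀) *
             ∑ t ∈ T \ A, (∏ u ∈ (T \ A).erase t, (1 - p u x₀)) * (-p' t))) x₀ := by
    apply HasDerivAt.fun_sum
    intro A hA
    simp only [Finset.mem_filter, Finset.mem_powerset] at hA
    have h1 : HasDerivAt (fun x => ∏ t ∈ A, p t x)
        (∑ t ∈ A, (∏ u ∈ A.erase t, p u x₀) * p' t) x₀ := by
      simpa [smul_eq_mul] using
        HasDerivAt.fun_finsetProd (fun i hi => hp i (hA.1 hi))
    have h2 : HasDerivAt (fun x => ∏ t ∈ T \ A, (1 - p t x))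
        (∑ t ∈ T \ A, (∏ u ∈ (T \ A).erase t, (1 - p u x₀)) * (-p' t)) x₀ := by
      simpa [smul_eq_mul] using
        HasDerivAt.fun_finsetProd (u := T \ A) (f := fun t x => 1 - p t x)
          (f' := fun t => -p' t)
          (fun i hi => ((hp i (Finset.mem_sdiff.mp hi).1).const_sub 1))
    exact h1.mul h2
  rw [← poissonBinomial_comb_key s hs T (fun u => p u x₀) p']
  exact main
end
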